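/- Let δ be a positive subharmonic function on the unit disk D with ∫_D δ dz = π, and let h : [0,1] → ℝ be a smooth strictly increasing function with h(0) = 0. Then ∫_D h(|z|) δ(z) dz ≥ ∫_D h(|z|) dz. -/

import Mathlib

open MeasureTheory

/-- The Laplacian of `f : ℂ → ℝ`, computed with respect to the real
orthonormal basis `{1, I}` of `ℂ ≅ ℝ²`. -/
noncomputable def lapC (f : ℂ → ℝ) (z : ℂ) : ℝ :=
  fderiv ℝ (fun w => fderiv ℝ f w 1) z 1 +
  fderiv ℝ (fun w => fderiv ℝ f w Complex.I) z Complex.I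

open Set Real
open scoped Real Topology Interval

noncomputable section

def cc (r θ : ℝ) : ℂ := Complex.polarCoord.symm (r, θ)

def ee (θ : ℝ) : ℂ := Real.cos θ + Real.sin θ * Complex.I

lemma cc_eq (r θ : ℝ) : cc r θ = (r : ℂ) * ee θ := by
  simp [cc, ee, Complex.polarCoord_symm_apply]

lemma ee_re (θ : ℝ) : (ee θ).re = Real.cos θ := by simp [ee, Complex.cos_ofReal_re]
lemma ee_im (θ : ℝ) : (ee θ).im = Real.sin θ := by simp [ee, Complex.sin_ofReal_re]

lemma abs_ee (θ : ℝ) : ‖ee θ‖ = 1 := by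
  rw [Complex.norm_def, Complex.normSq_apply, ee_re, ee_im]
  have : Real.cos θ * Real.cos θ + Real.sin θ * Real.sin θ = 1 := by
    nlinarith [Real.sin_sq_add_cos_sq θ]
  rw [this]
  exact Real.sqrt_one

lemma norm_ee (θ : ℝ) : ‖ee θ‖ = 1 := abs_ee θ

lemma abs_cc (r θ : ℝ) : ‖cc r θ‖ = |r| := by
  rw [cc]; exact Complex.norm_polarCoord_symm _

lemma cc_mem_ball {r : ℝ} (θ : ℝ) (hr : |r| < 1) : cc r θ ∈ Metric.ball (0:ℂ) 1 := by
  rw [Metric.mem_ball, dist_zero_right, abs_cc]; exact hr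

lemma cc_mem_closedBall {r ρ : ℝ} (θ : ℝ) (hr : |r| ≤ ρ) : cc r θ ∈ Metric.closedBall (0:ℂ) ρ := by
  rw [Metric.mem_closedBall, dist_zero_right, abs_cc]; exact hr

lemma hasDerivAt_cc_r (r θ : ℝ) : HasDerivAt (fun t => cc t θ) (ee θ) r := by
  have : HasDerivAt (fun t : ℝ => (t : ℂ) * ee θ) (ee θ) r := by
    simpa using (Complex.ofRealCLM.hasDerivAt (x := r)).mul_const (ee θ)
  simpa [funext fun t => cc_eq t θ] using this

lemma hasDerivAt_ee (θ : ℝ) : HasDerivAt ee (Complex.I * ee θ) θ := by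
  have hc : HasDerivAt (fun ψ : ℝ => ((Real.cos ψ : ℝ) : ℂ)) ((-Real.sin θ : ℝ) : ℂ) θ :=
    (Real.hasDerivAt_cos θ).ofReal_comp
  have hs : HasDerivAt (fun ψ : ℝ => ((Real.sin ψ : ℝ) : ℂ) * Complex.I)
      (((Real.cos θ : ℝ) : ℂ) * Complex.I) θ :=
    ((Real.hasDerivAt_sin θ).ofReal_comp).mul_const Complex.I
  have := hc.add hs
  have heq : ((-Real.sin θ : ℝ) : ℂ) + ((Real.cos θ : ℝ) : ℂ) * Complex.I = Complex.I * ee θ := by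
    simp [ee, Complex.ext_iff]
  rw [heq] at this
  exact this

lemma hasDerivAt_cc_theta (r θ : ℝ) :
    HasDerivAt (fun ψ => cc r ψ) ((r : ℂ) * (Complex.I * ee θ)) θ := by
  have : HasDerivAt (fun ψ : ℝ => (r : ℂ) * ee ψ) ((r : ℂ) * (Complex.I * ee θ)) θ :=
    (hasDerivAt_ee θ).const_mul _
  simpa [funext fun ψ => cc_eq r ψ] using this

lemma continuous_ee : Continuous ee := by
  unfold ee; fun_prop

lemma continuous_cc_theta (r : ℝ) : Continuous (fun θ => cc r θ) := by
  have : Continuous (fun θ : ℝ => (r : ℂ) * ee θ) := continuous_const.mul continuous_ee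
  simpa [funext fun θ => cc_eq r θ] using this

/-- continuity helper for CLM application -/
lemma contAt_clm_apply {E F : Type*} [NormedAddCommGroup E] [NormedSpace ℝ E]
    [NormedAddCommGroup F] [NormedSpace ℝ F]
    {f : ℝ → E →L[ℝ] F} {g : ℝ → E} {θ : ℝ}
    (hf : ContinuousAt f θ) (hg : ContinuousAt g θ) :
    ContinuousAt (fun x => f x (g x)) θ :=
  hf.clm_apply hg

section Core

variable {δ : ℂ → ℝ}

lemma cdAt (hC2 : ContDiffOn ℝ 2 δ (Metric.ball (0:ℂ) 1)) {z : ℂ}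
    (hz : z ∈ Metric.ball (0:ℂ) 1) : ContDiffAt ℝ 2 δ z :=
  hC2.contDiffAt (Metric.isOpen_ball.mem_nhds hz)

lemma L1 (hC2 : ContDiffOn ℝ 2 δ (Metric.ball (0:ℂ) 1)) {z : ℂ} (hz : z ∈ Metric.ball (0:ℂ) 1) :
    HasFDerivAt δ (fderiv ℝ δ z) z :=
  ((cdAt hC2 hz).differentiableAt (by norm_num)).hasFDerivAt

lemma cdAt1 (hC2 : ContDiffOn ℝ 2 δ (Metric.ball (0:ℂ) 1)) {z : ℂ} (hz : z ∈ Metric.ball (0:ℂ) 1) :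
    ContDiffAt ℝ 1 (fderiv ℝ δ) z :=
  (cdAt hC2 hz).fderiv_right (m := 1) (by norm_num)

lemma L2 (hC2 : ContDiffOn ℝ 2 δ (Metric.ball (0:ℂ) 1)) {z : ℂ} (hz : z ∈ Metric.ball (0:ℂ) 1) :
    HasFDerivAt (fderiv ℝ δ) (fderiv ℝ (fderiv ℝ δ) z) z :=
  ((cdAt1 hC2 hz).differentiableAt (by norm_num)).hasFDerivAt

lemma L1cont (hC2 : ContDiffOn ℝ 2 δ (Metric.ball (0:ℂ) 1)) {z : ℂ} (hz : z ∈ Metric.ball (0:ℂ) 1) :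
    ContinuousAt (fderiv ℝ δ) z :=
  (cdAt1 hC2 hz).continuousAt

lemma L2cont (hC2 : ContDiffOn ℝ 2 δ (Metric.ball (0:ℂ) 1)) {z : ℂ} (hz : z ∈ Metric.ball (0:ℂ) 1) :
    ContinuousAt (fderiv ℝ (fderiv ℝ δ)) z :=
  ((cdAt1 hC2 hz).fderiv_right (m := 0) (by norm_num)).continuousAt

lemma lap_eq (hC2 : ContDiffOn ℝ 2 δ (Metric.ball (0:ℂ) 1)) {z : ℂ} (hz : z ∈ Metric.ball (0:ℂ) 1) :
    lapC δ z = fderiv ℝ (fderiv ℝ δ) z 1 1 + fderiv ℝ (fderiv ℝ δ) z Complex.I Complex.I := by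
  have key : ∀ a b : ℂ, fderiv ℝ (fun w => fderiv ℝ δ w a) z b = fderiv ℝ (fderiv ℝ δ) z b a := by
    intro a b
    have h1 : HasFDerivAt (fun w => fderiv ℝ δ w a)
        ((ContinuousLinearMap.apply ℝ ℝ a).comp (fderiv ℝ (fderiv ℝ δ) z)) z :=
      (ContinuousLinearMap.apply ℝ ℝ a).hasFDerivAt.comp z (L2 hC2 hz)
    rw [h1.fderiv]; rfl
  rw [lapC, key, key]

lemma rot (T : ℂ →L[ℝ] ℂ →L[ℝ] ℝ) (θ : ℝ) :
    T (ee θ) (ee θ) + T (Complex.I * ee θ) (Complex.I * ee θ)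
      = T 1 1 + T Complex.I Complex.I := by
  have h1 : ee θ = Real.cos θ • (1:ℂ) + Real.sin θ • Complex.I := by
    simp [ee, Complex.real_smul]
  have h2 : Complex.I * ee θ = (-Real.sin θ) • (1:ℂ) + Real.cos θ • Complex.I := by
    simp only [Complex.real_smul, Complex.ofReal_neg, smul_eq_mul, mul_one, ee]
    ring_nf
    rw [Complex.I_sq]
    ring
  rw [h2, h1]
  simp only [map_add, _root_.map_smul, ContinuousLinearMap.add_apply,
    ContinuousLinearMap.smul_apply, ContinuousLinearMap.coe_smul', Pi.smul_apply, smul_eq_mul]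
  linear_combination ((T 1) 1 + (T Complex.I) Complex.I) * Real.sin_sq_add_cos_sq θ

/-- partial derivatives in r -/
def P1 (δ : ℂ → ℝ) (r θ : ℝ) : ℝ := fderiv ℝ δ (cc r θ) (ee θ)
def P2 (δ : ℂ → ℝ) (r θ : ℝ) : ℝ := fderiv ℝ (fderiv ℝ δ) (cc r θ) (ee θ) (ee θ)
def Q1 (δ : ℂ → ℝ) (r θ : ℝ) : ℝ := fderiv ℝ δ (cc r θ) ((r:ℂ) * (Complex.I * ee θ))
def Q2 (δ : ℂ → ℝ) (r θ : ℝ) : ℝ :=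
  fderiv ℝ (fderiv ℝ δ) (cc r θ) ((r:ℂ) * (Complex.I * ee θ)) ((r:ℂ) * (Complex.I * ee θ))
    - fderiv ℝ δ (cc r θ) ((r:ℂ) * ee θ)
def LL (δ : ℂ → ℝ) (r θ : ℝ) : ℝ :=
  fderiv ℝ (fderiv ℝ δ) (cc r θ) 1 1 + fderiv ℝ (fderiv ℝ δ) (cc r θ) Complex.I Complex.I

variable {δ : ℂ → ℝ}

lemma hP1 (hC2 : ContDiffOn ℝ 2 δ (Metric.ball (0:ℂ) 1)) {r : ℝ} (θ : ℝ) (hr : |r| < 1) :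
    HasDerivAt (fun t => δ (cc t θ)) (P1 δ r θ) r :=
  (L1 hC2 (cc_mem_ball θ hr)).comp_hasDerivAt r (hasDerivAt_cc_r r θ)

lemma hP2 (hC2 : ContDiffOn ℝ 2 δ (Metric.ball (0:ℂ) 1)) {r : ℝ} (θ : ℝ) (hr : |r| < 1) :
    HasDerivAt (fun t => P1 δ t θ) (P2 δ r θ) r := by
  have hd : HasDerivAt (fun t => fderiv ℝ δ (cc t θ))
      (fderiv ℝ (fderiv ℝ δ) (cc r θ) (ee θ)) r :=
    (L2 hC2 (cc_mem_ball θ hr)).comp_hasDerivAt r (hasDerivAt_cc_r r θ)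
  have := hd.clm_apply (hasDerivAt_const r (ee θ))
  simpa [P1, P2] using this

lemma hQ1 (hC2 : ContDiffOn ℝ 2 δ (Metric.ball (0:ℂ) 1)) {r : ℝ} (θ : ℝ) (hr : |r| < 1) :
    HasDerivAt (fun ψ => δ (cc r ψ)) (Q1 δ r θ) θ :=
  (L1 hC2 (cc_mem_ball θ hr)).comp_hasDerivAt θ (hasDerivAt_cc_theta r θ)

lemma hQ2 (hC2 : ContDiffOn ℝ 2 δ (Metric.ball (0:ℂ) 1)) {r : ℝ} (θ : ℝ) (hr : |r| < 1) :
    HasDerivAt (fun ψ => Q1 δ r ψ) (Q2 δ r θ) θ := by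
  have hc : HasDerivAt (fun ψ => fderiv ℝ δ (cc r ψ))
      (fderiv ℝ (fderiv ℝ δ) (cc r θ) ((r:ℂ) * (Complex.I * ee θ))) θ :=
    (L2 hC2 (cc_mem_ball θ hr)).comp_hasDerivAt θ (hasDerivAt_cc_theta r θ)
  have hu : HasDerivAt (fun ψ : ℝ => (r:ℂ) * (Complex.I * ee ψ))
      ((r:ℂ) * (Complex.I * (Complex.I * ee θ))) θ :=
    (((hasDerivAt_ee θ).const_mul Complex.I).const_mul (r:ℂ))
  have := hc.clm_apply hu
  have heq : (r:ℂ) * (Complex.I * (Complex.I * ee θ)) = -((r:ℂ) * ee θ) := by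
    ring_nf
    rw [Complex.I_sq]
    ring
  rw [heq] at this
  simpa [Q1, Q2, map_neg, sub_eq_add_neg] using this

lemma contP1 (hC2 : ContDiffOn ℝ 2 δ (Metric.ball (0:ℂ) 1)) {r : ℝ} (hr : |r| < 1) :
    Continuous (fun θ => P1 δ r θ) := by
  rw [continuous_iff_continuousAt]
  intro θ
  exact contAt_clm_apply
    ((L1cont hC2 (cc_mem_ball θ hr)).comp (continuous_cc_theta r).continuousAt)
    continuous_ee.continuousAt

lemma contP2 (hC2 : ContDiffOn ℝ 2 δ (Metric.ball (0:ℂ) 1)) {r : ℝ} (hr : |r| < 1) :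
    Continuous (fun θ => P2 δ r θ) := by
  rw [continuous_iff_continuousAt]
  intro θ
  exact contAt_clm_apply (contAt_clm_apply
    ((L2cont hC2 (cc_mem_ball θ hr)).comp (continuous_cc_theta r).continuousAt)
    continuous_ee.continuousAt) continuous_ee.continuousAt

lemma contQ2 (hC2 : ContDiffOn ℝ 2 δ (Metric.ball (0:ℂ) 1)) {r : ℝ} (hr : |r| < 1) :
    Continuous (fun θ => Q2 δ r θ) := by
  rw [continuous_iff_continuousAt]
  intro θ
  have hu : ContinuousAt (fun ψ : ℝ => (r:ℂ) * (Complex.I * ee ψ)) θ :=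
    (continuous_const.mul (continuous_const.mul continuous_ee)).continuousAt
  have hv : ContinuousAt (fun ψ : ℝ => (r:ℂ) * ee ψ) θ :=
    (continuous_const.mul continuous_ee).continuousAt
  exact ContinuousAt.sub
    (contAt_clm_apply (contAt_clm_apply
      ((L2cont hC2 (cc_mem_ball θ hr)).comp (continuous_cc_theta r).continuousAt) hu) hu)
    (contAt_clm_apply
      ((L1cont hC2 (cc_mem_ball θ hr)).comp (continuous_cc_theta r).continuousAt) hv)

lemma contLL (hC2 : ContDiffOn ℝ 2 δ (Metric.ball (0:ℂ) 1)) {r : ℝ} (hr : |r| < 1) :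
    Continuous (fun θ => LL δ r θ) := by
  rw [continuous_iff_continuousAt]
  intro θ
  have hb : ContinuousAt (fun ψ : ℝ => fderiv ℝ (fderiv ℝ δ) (cc r ψ)) θ :=
    (L2cont hC2 (cc_mem_ball θ hr)).comp (continuous_cc_theta r).continuousAt
  exact ContinuousAt.add
    (contAt_clm_apply (contAt_clm_apply hb continuousAt_const) continuousAt_const)
    (contAt_clm_apply (contAt_clm_apply hb continuousAt_const) continuousAt_const)

lemma contU (hC2 : ContDiffOn ℝ 2 δ (Metric.ball (0:ℂ) 1)) {r : ℝ} (hr : |r| < 1) :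
    Continuous (fun θ => δ (cc r θ)) := by
  rw [continuous_iff_continuousAt]
  intro θ
  exact ((cdAt hC2 (cc_mem_ball θ hr)).continuousAt).comp (continuous_cc_theta r).continuousAt

lemma bound1 (hC2 : ContDiffOn ℝ 2 δ (Metric.ball (0:ℂ) 1)) {ρ : ℝ} (hρ : ρ < 1) :
    ∃ M : ℝ, ∀ z ∈ Metric.closedBall (0:ℂ) ρ, ‖fderiv ℝ δ z‖ ≤ M := by
  have hsub : Metric.closedBall (0:ℂ) ρ ⊆ Metric.ball (0:ℂ) 1 := by
    intro z hz
    rw [Metric.mem_closedBall] at hz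
    rw [Metric.mem_ball]
    linarith
  have hcont : ContinuousOn (fderiv ℝ δ) (Metric.closedBall (0:ℂ) ρ) :=
    fun z hz => (L1cont hC2 (hsub hz)).continuousWithinAt
  exact (isCompact_closedBall _ _).exists_bound_of_continuousOn hcont

lemma bound2 (hC2 : ContDiffOn ℝ 2 δ (Metric.ball (0:ℂ) 1)) {ρ : ℝ} (hρ : ρ < 1) :
    ∃ M : ℝ, ∀ z ∈ Metric.closedBall (0:ℂ) ρ, ‖fderiv ℝ (fderiv ℝ δ) z‖ ≤ M := by
  have hsub : Metric.closedBall (0:ℂ) ρ ⊆ Metric.ball (0:ℂ) 1 := by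
    intro z hz
    rw [Metric.mem_closedBall] at hz
    rw [Metric.mem_ball]
    linarith
  have hcont : ContinuousOn (fderiv ℝ (fderiv ℝ δ)) (Metric.closedBall (0:ℂ) ρ) :=
    fun z hz => (L2cont hC2 (hsub hz)).continuousWithinAt
  exact (isCompact_closedBall (0:ℂ) ρ).exists_bound_of_continuousOn (f := fderiv ℝ (fderiv ℝ δ)) hcont

def AA (δ : ℂ → ℝ) (r : ℝ) : ℝ := ∫ θ in (-π)..π, δ (cc r θ)
def GG (δ : ℂ → ℝ) (r : ℝ) : ℝ := ∫ θ in (-π)..π, r * P1 δ r θ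

lemma habs_aux {r₀ : ℝ} (h0 : 0 < r₀) (h1 : r₀ < 1) :
    ∀ x ∈ Metric.ball r₀ ((1 - r₀)/2), |x| ≤ (1 + r₀)/2 ∧ |x| < 1 := by
  intro x hx
  rw [Metric.mem_ball, Real.dist_eq] at hx
  have h2 : |x| ≤ |x - r₀| + |r₀| := by
    have := abs_add_le (x - r₀) r₀
    simpa using this
  rw [abs_of_pos h0] at h2
  constructor <;> [linarith; linarith]

lemma claim1 (hC2 : ContDiffOn ℝ 2 δ (Metric.ball (0:ℂ) 1)) {r₀ : ℝ}
    (h0 : 0 < r₀) (h1 : r₀ < 1) :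
    HasDerivAt (AA δ) (∫ θ in (-π)..π, P1 δ r₀ θ) r₀ := by
  obtain ⟨M1, hM1⟩ := bound1 hC2 (show (1+r₀)/2 < 1 by linarith)
  have hε_pos : (0:ℝ) < (1 - r₀)/2 := by linarith
  have habs := habs_aux h0 h1
  have hr₀ : |r₀| < 1 := by rw [abs_of_pos h0]; exact h1
  have := intervalIntegral.hasDerivAt_integral_of_dominated_loc_of_deriv_le
    (F := fun x θ => δ (cc x θ)) (F' := fun x θ => P1 δ x θ) (bound := fun _ => M1)
    (a := -π) (b := π) (μ := volume) (Metric.ball_mem_nhds r₀ hε_pos)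
    (by filter_upwards [Metric.ball_mem_nhds r₀ hε_pos] with x hx
        exact (contU hC2 (habs x hx).2).aestronglyMeasurable)
    ((contU hC2 hr₀).intervalIntegrable _ _)
    ((contP1 hC2 hr₀).aestronglyMeasurable)
    (Filter.Eventually.of_forall (fun θ _ x hx => by
      have hz := cc_mem_closedBall (r := x) θ (habs x hx).1
      calc ‖P1 δ x θ‖ ≤ ‖fderiv ℝ δ (cc x θ)‖ * ‖ee θ‖ :=
              (fderiv ℝ δ (cc x θ)).le_opNorm _
        _ = ‖fderiv ℝ δ (cc x θ)‖ := by rw [norm_ee, mul_one]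
        _ ≤ M1 := hM1 _ hz))
    (intervalIntegrable_const)
    (Filter.Eventually.of_forall (fun θ _ x hx => hP1 hC2 θ (habs x hx).2))
  exact this.2

lemma claim2 (hC2 : ContDiffOn ℝ 2 δ (Metric.ball (0:ℂ) 1)) {r₀ : ℝ}
    (h0 : 0 < r₀) (h1 : r₀ < 1) :
    HasDerivAt (GG δ) (∫ θ in (-π)..π, (P1 δ r₀ θ + r₀ * P2 δ r₀ θ)) r₀ := by
  obtain ⟨M1, hM1⟩ := bound1 hC2 (show (1+r₀)/2 < 1 by linarith)
  obtain ⟨M2, hM2⟩ := bound2 hC2 (show (1+r₀)/2 < 1 by linarith)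
  have hε_pos : (0:ℝ) < (1 - r₀)/2 := by linarith
  have habs := habs_aux h0 h1
  have hr₀ : |r₀| < 1 := by rw [abs_of_pos h0]; exact h1
  have key : ∀ x : ℝ, |x| < 1 → ∀ θ : ℝ,
      HasDerivAt (fun t => t * P1 δ t θ) (P1 δ x θ + x * P2 δ x θ) x := by
    intro x hx θ
    have := (hasDerivAt_id' x).mul (hP2 hC2 θ hx)
    simp only [one_mul] at this
    exact this
  have := intervalIntegral.hasDerivAt_integral_of_dominated_loc_of_deriv_le
    (F := fun x θ => x * P1 δ x θ) (F' := fun x θ => P1 δ x θ + x * P2 δ x θ)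
    (bound := fun _ => M1 + M2)
    (a := -π) (b := π) (μ := volume) (Metric.ball_mem_nhds r₀ hε_pos)
    (by filter_upwards [Metric.ball_mem_nhds r₀ hε_pos] with x hx
        exact (continuous_const.mul (contP1 hC2 (habs x hx).2)).aestronglyMeasurable)
    ((continuous_const.mul (contP1 hC2 hr₀)).intervalIntegrable _ _)
    ((contP1 hC2 hr₀).add (continuous_const.mul (contP2 hC2 hr₀))).aestronglyMeasurable
    (Filter.Eventually.of_forall (fun θ _ x hx => by
      have hz := cc_mem_closedBall (r := x) θ (habs x hx).1
      have b1 : ‖P1 δ x θ‖ ≤ M1 := by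
        calc ‖P1 δ x θ‖ ≤ ‖fderiv ℝ δ (cc x θ)‖ * ‖ee θ‖ :=
                (fderiv ℝ δ (cc x θ)).le_opNorm _
          _ = ‖fderiv ℝ δ (cc x θ)‖ := by rw [norm_ee, mul_one]
          _ ≤ M1 := hM1 _ hz
      have b2 : ‖P2 δ x θ‖ ≤ M2 := by
        calc ‖P2 δ x θ‖ ≤ ‖fderiv ℝ (fderiv ℝ δ) (cc x θ) (ee θ)‖ * ‖ee θ‖ :=
                (fderiv ℝ (fderiv ℝ δ) (cc x θ) (ee θ)).le_opNorm _
          _ ≤ (‖fderiv ℝ (fderiv ℝ δ) (cc x θ)‖ * ‖ee θ‖) * ‖ee θ‖ :=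
                mul_le_mul_of_nonneg_right
                  ((fderiv ℝ (fderiv ℝ δ) (cc x θ)).le_opNorm _) (norm_nonneg _)
          _ = ‖fderiv ℝ (fderiv ℝ δ) (cc x θ)‖ := by rw [norm_ee]; ring
          _ ≤ M2 := hM2 _ hz
      have hx1 : |x| ≤ 1 := (habs x hx).2.le
      calc ‖P1 δ x θ + x * P2 δ x θ‖ ≤ ‖P1 δ x θ‖ + ‖x * P2 δ x θ‖ := norm_add_le _ _
        _ = ‖P1 δ x θ‖ + |x| * ‖P2 δ x θ‖ := by rw [norm_mul]; rfl
        _ ≤ M1 + M2 := by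
            have h2 : |x| * ‖P2 δ x θ‖ ≤ 1 * M2 :=
              mul_le_mul hx1 b2 (norm_nonneg _) one_pos.le
            linarith))
    (intervalIntegrable_const)
    (Filter.Eventually.of_forall (fun θ _ x hx => key x (habs x hx).2 θ))
  exact this.2

lemma Qint_zero (hC2 : ContDiffOn ℝ 2 δ (Metric.ball (0:ℂ) 1)) {r : ℝ} (hr : |r| < 1) :
    ∫ θ in (-π)..π, Q2 δ r θ = 0 := by
  rw [intervalIntegral.integral_eq_sub_of_hasDerivAt (fun θ _ => hQ2 hC2 θ hr)
    ((contQ2 hC2 hr).intervalIntegrable _ _)]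
  have h1 : cc r π = cc r (-π) := by simp [cc_eq, ee]
  have h2 : ee π = ee (-π) := by simp [ee]
  unfold Q1
  rw [h1, h2]
  ring

lemma keyG (hC2 : ContDiffOn ℝ 2 δ (Metric.ball (0:ℂ) 1)) {r : ℝ}
    (h0 : 0 < r) (h1 : r < 1) :
    ∫ θ in (-π)..π, (P1 δ r θ + r * P2 δ r θ) = r * ∫ θ in (-π)..π, LL δ r θ := by
  have habs : |r| < 1 := by rw [abs_of_pos h0]; exact h1
  have hrne : r ≠ 0 := ne_of_gt h0
  have hpt : ∀ θ, P1 δ r θ + r * P2 δ r θ = r * LL δ r θ - (1/r) * Q2 δ r θ := by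
    intro θ
    have hrot := rot (fderiv ℝ (fderiv ℝ δ) (cc r θ)) θ
    have hsm : fderiv ℝ (fderiv ℝ δ) (cc r θ) ((r:ℂ) * (Complex.I * ee θ))
        ((r:ℂ) * (Complex.I * ee θ))
        = r * (r * (fderiv ℝ (fderiv ℝ δ) (cc r θ) (Complex.I * ee θ) (Complex.I * ee θ))) := by
      rw [show ((r:ℂ) * (Complex.I * ee θ)) = r • (Complex.I * ee θ) from
        (Complex.real_smul).symm]
      rw [_root_.map_smul, _root_.map_smul, ContinuousLinearMap.smul_apply, smul_eq_mul,
        smul_eq_mul]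
    have hsm1 : fderiv ℝ δ (cc r θ) ((r:ℂ) * ee θ) = r * fderiv ℝ δ (cc r θ) (ee θ) := by
      rw [show ((r:ℂ) * ee θ) = r • ee θ from (Complex.real_smul).symm, _root_.map_smul]
      rfl
    unfold P1 P2 Q2 LL
    rw [hsm, hsm1]
    field_simp
    linear_combination r * hrot
  rw [intervalIntegral.integral_congr (fun θ _ => hpt θ)]
  rw [intervalIntegral.integral_sub
    ((show Continuous (fun θ => r * LL δ r θ) from
      continuous_const.mul (contLL hC2 habs)).intervalIntegrable _ _)
    ((show Continuous (fun θ => 1 / r * Q2 δ r θ) from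
      continuous_const.mul (contQ2 hC2 habs)).intervalIntegrable _ _)]
  rw [intervalIntegral.integral_const_mul, intervalIntegral.integral_const_mul,
    Qint_zero hC2 habs]
  ring

lemma GG_hasDeriv (hC2 : ContDiffOn ℝ 2 δ (Metric.ball (0:ℂ) 1)) {r : ℝ}
    (h0 : 0 < r) (h1 : r < 1) :
    HasDerivAt (GG δ) (r * ∫ θ in (-π)..π, LL δ r θ) r := by
  have := claim2 hC2 h0 h1
  rwa [keyG hC2 h0 h1] at this

lemma AA_mono (hC2 : ContDiffOn ℝ 2 δ (Metric.ball (0:ℂ) 1))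
    (hsub : ∀ z ∈ Metric.ball (0:ℂ) 1, 0 ≤ lapC δ z) :
    MonotoneOn (AA δ) (Ioo (0:ℝ) 1) := by
  have hLL : ∀ r ∈ Ioo (0:ℝ) 1, ∀ θ : ℝ, 0 ≤ LL δ r θ := by
    intro r hr θ
    have hmem : cc r θ ∈ Metric.ball (0:ℂ) 1 :=
      cc_mem_ball θ (by rw [abs_of_pos hr.1]; exact hr.2)
    have := hsub _ hmem
    rwa [lap_eq hC2 hmem] at this
  have hG' : ∀ r ∈ Ioo (0:ℝ) 1, 0 ≤ r * ∫ θ in (-π)..π, LL δ r θ := by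
    intro r hr
    exact mul_nonneg hr.1.le (intervalIntegral.integral_nonneg
      (by linarith [Real.pi_pos]) (fun θ _ => hLL r hr θ))
  have hGmono : MonotoneOn (GG δ) (Ioo (0:ℝ) 1) := by
    apply monotoneOn_of_deriv_nonneg (convex_Ioo _ _)
    · exact fun r hr => (GG_hasDeriv hC2 hr.1 hr.2).continuousAt.continuousWithinAt
    · rw [interior_Ioo]
      exact fun r hr => (GG_hasDeriv hC2 hr.1 hr.2).differentiableAt.differentiableWithinAt
    · rw [interior_Ioo]
      intro r hr
      rw [(GG_hasDeriv hC2 hr.1 hr.2).deriv]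
      exact hG' r hr
  obtain ⟨M1, hM1⟩ := bound1 hC2 (show (1:ℝ)/2 < 1 by norm_num)
  have htend : Filter.Tendsto (GG δ) (nhdsWithin 0 (Ioi 0)) (nhds 0) := by
    apply squeeze_zero_norm' (a := fun r => r * (M1 * (2*π)))
    · filter_upwards [Ioo_mem_nhdsGT_of_mem
        (show (0:ℝ) ∈ Ico (0:ℝ) (1/2) by constructor <;> norm_num)] with r hr
      have hb : ∀ θ ∈ Ι (-π) π, ‖r * P1 δ r θ‖ ≤ r * M1 := by
        intro θ _
        have hz : cc r θ ∈ Metric.closedBall (0:ℂ) (1/2) :=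
          cc_mem_closedBall θ (by rw [abs_of_pos hr.1]; exact hr.2.le)
        have b1 : ‖P1 δ r θ‖ ≤ M1 := by
          calc ‖P1 δ r θ‖ ≤ ‖fderiv ℝ δ (cc r θ)‖ * ‖ee θ‖ :=
                  (fderiv ℝ δ (cc r θ)).le_opNorm _
            _ = ‖fderiv ℝ δ (cc r θ)‖ := by rw [norm_ee, mul_one]
            _ ≤ M1 := hM1 _ hz
        rw [norm_mul, Real.norm_eq_abs, abs_of_pos hr.1]
        exact mul_le_mul_of_nonneg_left b1 hr.1.le
      calc ‖GG δ r‖ ≤ (r * M1) * |π - (-π)| :=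
            intervalIntegral.norm_integral_le_of_norm_le_const hb
        _ = r * (M1 * (2*π)) := by
            rw [abs_of_pos (by linarith [Real.pi_pos] : (0:ℝ) < π - (-π))]
            ring
    · have : Filter.Tendsto (fun r : ℝ => r * (M1 * (2*π))) (nhds 0) (nhds (0 * (M1 * (2*π)))) :=
        (continuous_mul_right _).tendsto 0
      rw [zero_mul] at this
      exact this.mono_left nhdsWithin_le_nhds
  have hGnonneg : ∀ r ∈ Ioo (0:ℝ) 1, 0 ≤ GG δ r := by
    intro r hr
    refine le_of_tendsto htend ?_
    filter_upwards [Ioo_mem_nhdsGT_of_mem (show (0:ℝ) ∈ Ico (0:ℝ) r from ⟨le_refl _, hr.1⟩)]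
      with s hs
    exact hGmono ⟨hs.1, hs.2.trans hr.2⟩ hr hs.2.le
  have hA' : ∀ r ∈ Ioo (0:ℝ) 1, 0 ≤ ∫ θ in (-π)..π, P1 δ r θ := by
    intro r hr
    have hGG : GG δ r = r * ∫ θ in (-π)..π, P1 δ r θ :=
      intervalIntegral.integral_const_mul _ _
    have := hGnonneg r hr
    rw [hGG] at this
    exact nonneg_of_mul_nonneg_right this hr.1
  apply monotoneOn_of_deriv_nonneg (convex_Ioo _ _)
  · exact fun r hr => (claim1 hC2 hr.1 hr.2).continuousAt.continuousWithinAt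
  · rw [interior_Ioo]
    exact fun r hr => (claim1 hC2 hr.1 hr.2).differentiableAt.differentiableWithinAt
  · rw [interior_Ioo]
    intro r hr
    rw [(claim1 hC2 hr.1 hr.2).deriv]
    exact hA' r hr

end Core




lemma polar_aux (g : ℂ → ℝ) (hg : IntegrableOn g (Metric.ball (0:ℂ) 1)) :
    IntegrableOn (fun p : ℝ × ℝ => p.1 * g (Complex.polarCoord.symm p))
      (Ioo (0:ℝ) 1 ×ˢ Ioo (-π) π) ∧
    ∫ z in Metric.ball (0:ℂ) 1, g z
      = ∫ r in Ioo (0:ℝ) 1, ∫ θ in Ioo (-π) π, r * g (Complex.polarCoord.symm (r, θ)) := by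
  set s : Set (ℝ × ℝ) := Ioo (0:ℝ) 1 ×ˢ Ioo (-π) π with hs_def
  have hs : MeasurableSet s := measurableSet_Ioo.prod measurableSet_Ioo
  have hsub : s ⊆ polarCoord.target := by
    rintro ⟨r, θ⟩ ⟨hr, hθ⟩
    exact ⟨hr.1, hθ⟩
  have hmem : ∀ p ∈ s, Complex.polarCoord.symm p ∈ Metric.ball (0:ℂ) 1 := by
    rintro ⟨r, θ⟩ ⟨hr, hθ⟩
    rw [Metric.mem_ball, dist_zero_right, Complex.norm_polarCoord_symm]
    simpa [abs_of_pos hr.1] using hr.2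
  -- the equiv
  set e := Complex.measurableEquivRealProd with he_def
  have hcomp : ∀ p : ℝ × ℝ, e.symm (polarCoord.symm p) = Complex.polarCoord.symm p := fun p => rfl
  -- integrability
  have hint : IntegrableOn (fun p : ℝ × ℝ => p.1 * g (Complex.polarCoord.symm p)) s := by
    have h1 : IntegrableOn (g ∘ e.symm) (e.symm ⁻¹' Metric.ball (0:ℂ) 1) := by
      have hmp : MeasurePreserving e.symm volume volume :=
        Complex.volume_preserving_equiv_real_prod.symm
      have hr := hmp.restrict_preimage (s := Metric.ball (0:ℂ) 1) measurableSet_ball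
      exact (hr.integrable_comp_emb e.symm.measurableEmbedding (g := g)).2 hg
    have h2 : polarCoord.symm '' s ⊆ e.symm ⁻¹' Metric.ball (0:ℂ) 1 := by
      rintro x ⟨p, hp, rfl⟩
      rw [Set.mem_preimage, hcomp]
      exact hmem p hp
    have h3 : IntegrableOn (g ∘ e.symm) (polarCoord.symm '' s) := h1.mono_set h2
    have hder : ∀ p ∈ s, HasFDerivWithinAt polarCoord.symm
        (LinearMap.toContinuousLinearMap (Matrix.toLin (Module.Basis.finTwoProd ℝ) (Module.Basis.finTwoProd ℝ)
          !![Real.cos p.2, -p.1 * Real.sin p.2; Real.sin p.2, p.1 * Real.cos p.2])) s p :=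
      fun p _ => (hasFDerivAt_polarCoord_symm p).hasFDerivWithinAt
    have hinj : InjOn polarCoord.symm s := by
      have : InjOn polarCoord.symm polarCoord.symm.source := polarCoord.symm.injOn
      exact this.mono hsub
    have h4 := (integrableOn_image_iff_integrableOn_abs_det_fderiv_smul volume hs hder hinj
      (g ∘ e.symm)).1 h3
    refine (h4.congr_fun ?_ hs)
    rintro ⟨r, θ⟩ hp
    have hdet : (LinearMap.toContinuousLinearMap (Matrix.toLin (Module.Basis.finTwoProd ℝ)
        (Module.Basis.finTwoProd ℝ)
        !![Real.cos θ, -r * Real.sin θ; Real.sin θ, r * Real.cos θ])).det = r := by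
      conv_rhs => rw [← one_mul r, ← Real.cos_sq_add_sin_sq θ]
      simp only [neg_mul, LinearMap.det_toContinuousLinearMap, LinearMap.det_toLin,
        Matrix.det_fin_two_of, sub_neg_eq_add]
      ring
    simp only [hdet, smul_eq_mul, Function.comp_apply, hcomp]
    rw [abs_of_pos hp.1.1]
  refine ⟨hint, ?_⟩
  -- value
  have h1 : ∫ z in Metric.ball (0:ℂ) 1, g z = ∫ z, Set.indicator (Metric.ball (0:ℂ) 1) g z :=
    (integral_indicator measurableSet_ball).symm
  rw [h1, ← Complex.integral_comp_polarCoord_symm (Set.indicator (Metric.ball (0:ℂ) 1) g)]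
  have h2 : ∀ p ∈ polarCoord.target,
      p.1 • Set.indicator (Metric.ball (0:ℂ) 1) g (Complex.polarCoord.symm p)
      = Set.indicator s (fun p : ℝ × ℝ => p.1 * g (Complex.polarCoord.symm p)) p := by
    rintro ⟨r, θ⟩ ⟨hr, hθ⟩
    by_cases hr1 : r < 1
    · have hps : (r, θ) ∈ s := ⟨⟨hr, hr1⟩, hθ⟩
      rw [Set.indicator_of_mem hps, Set.indicator_of_mem (hmem _ hps)]
      simp [smul_eq_mul]
    · have hps : (r, θ) ∉ s := fun hmem' => hr1 hmem'.1.2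
      have : Complex.polarCoord.symm (r, θ) ∉ Metric.ball (0:ℂ) 1 := by
        rw [Metric.mem_ball, dist_zero_right, Complex.norm_polarCoord_symm]
        rw [abs_of_pos hr]
        exact fun hc => hr1 hc
      rw [Set.indicator_of_notMem hps, Set.indicator_of_notMem this]
      simp
  rw [setIntegral_congr_fun polarCoord.open_target.measurableSet h2]
  rw [setIntegral_indicator hs]
  have h3 : polarCoord.target ∩ s = s := Set.inter_eq_self_of_subset_right hsub
  rw [h3]
  have h4 : (volume : Measure (ℝ × ℝ)) = (volume : Measure ℝ).prod volume := rfl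
  rw [hs_def] at hint ⊢
  rw [h4] at hint ⊢
  exact setIntegral_prod _ hint


set_option maxHeartbeats 1000000 in
/-- Comparison with Lebesgue measure: for a positive subharmonic density `δ` on
the unit disk of total mass `π` and a smooth strictly increasing `h` with
`h(0) = 0`, one has `∫_D h(|z|) δ(z) dz ≥ ∫_D h(|z|) dz`. -/
theorem comparison_with_lebesgue
    (δ : ℂ → ℝ)
    (hpos : ∀ z ∈ Metric.ball (0 : ℂ) 1, 0 < δ z)
    (hC2 : ContDiffOn ℝ 2 δ (Metric.ball (0 : ℂ) 1))
    (hsub : ∀ z ∈ Metric.ball (0 : ℂ) 1, 0 ≤ lapC δ z)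
    (hint : IntegrableOn δ (Metric.ball (0 : ℂ) 1) volume)
    (htotal : ∫ z in Metric.ball (0 : ℂ) 1, δ z = Real.pi)
    (h : ℝ → ℝ)
    (hsmooth : ContDiffOn ℝ (⊤ : ℕ∞) h (Set.Icc (0 : ℝ) 1))
    (hmono : StrictMonoOn h (Set.Icc (0 : ℝ) 1))
    (h0 : h 0 = 0)
    (hint' : IntegrableOn (fun z => h (‖z‖) * δ z)
      (Metric.ball (0 : ℂ) 1) volume) :
    ∫ z in Metric.ball (0 : ℂ) 1, h (‖z‖) * δ z ≥
      ∫ z in Metric.ball (0 : ℂ) 1, h (‖z‖) := by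
  have hpi : -π ≤ π := by linarith [Real.pi_pos]
  have hconv : ∀ f : ℝ → ℝ, ∫ θ in Ioo (-π) π, f θ = ∫ θ in (-π)..π, f θ := by
    intro f
    rw [intervalIntegral.integral_of_le hpi, integral_Ioc_eq_integral_Ioo]
  -- integrability of h ∘ abs on the ball
  have hHint : IntegrableOn (fun z : ℂ => h (‖z‖)) (Metric.ball (0:ℂ) 1) := by
    have hmaps : Set.MapsTo (fun z : ℂ => ‖z‖) (Metric.closedBall (0:ℂ) 1)
        (Set.Icc (0:ℝ) 1) := by
      intro z hz
      rw [Metric.mem_closedBall, dist_zero_right] at hz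
      exact ⟨norm_nonneg z, hz⟩
    have hcont : ContinuousOn (fun z : ℂ => h (‖z‖)) (Metric.closedBall (0:ℂ) 1) :=
      hsmooth.continuousOn.comp continuous_norm.continuousOn hmaps
    exact (hcont.integrableOn_compact (isCompact_closedBall _ _)).mono_set
      Metric.ball_subset_closedBall
  obtain ⟨hint1, heq1⟩ := polar_aux δ hint
  obtain ⟨hint2, heq2⟩ := polar_aux _ hint'
  obtain ⟨hint3, heq3⟩ := polar_aux _ hHint
  -- inner integral simplifications
  have e1 : ∀ r : ℝ, (∫ θ in Ioo (-π) π, r * δ (Complex.polarCoord.symm (r, θ)))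
      = r * AA δ r := by
    intro r
    rw [integral_const_mul, AA, ← hconv]
    simp only [cc]
  have e2 : ∀ r ∈ Ioo (0:ℝ) 1,
      (∫ θ in Ioo (-π) π, r * (h (‖Complex.polarCoord.symm (r, θ)‖) *
        δ (Complex.polarCoord.symm (r, θ)))) = (r * h r) * AA δ r := by
    intro r hr
    have habs : ∀ θ : ℝ, ‖Complex.polarCoord.symm (r, θ)‖ = r := by
      intro θ
      rw [Complex.norm_polarCoord_symm, abs_of_pos hr.1]
    have : (fun θ => r * (h (‖Complex.polarCoord.symm (r, θ)‖) *
        δ (Complex.polarCoord.symm (r, θ))))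
        = fun θ => (r * h r) * δ (Complex.polarCoord.symm (r, θ)) := by
      funext θ
      rw [habs θ]
      ring
    rw [this, integral_const_mul, AA, ← hconv]
    simp only [cc]
  have e3 : ∀ r ∈ Ioo (0:ℝ) 1,
      (∫ θ in Ioo (-π) π, r * h (‖Complex.polarCoord.symm (r, θ)‖))
        = (r * h r) * (2*π) := by
    intro r hr
    have habs : ∀ θ : ℝ, ‖Complex.polarCoord.symm (r, θ)‖ = r := by
      intro θ
      rw [Complex.norm_polarCoord_symm, abs_of_pos hr.1]
    have : (fun θ => r * h (‖Complex.polarCoord.symm (r, θ)‖))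
        = fun _ => r * h r := by
      funext θ
      rw [habs θ]
    rw [this, setIntegral_const, measureReal_def, Real.volume_Ioo, smul_eq_mul,
      ENNReal.toReal_ofReal (by linarith : (0:ℝ) ≤ π - -π)]
    ring
  -- outer integrability
  have hvol : (volume : Measure (ℝ × ℝ)) = (volume : Measure ℝ).prod volume := rfl
  have transport : ∀ (g : ℂ → ℝ),
      IntegrableOn (fun p : ℝ × ℝ => p.1 * g (Complex.polarCoord.symm p))
        (Ioo (0:ℝ) 1 ×ˢ Ioo (-π) π) →
      IntegrableOn (fun r => ∫ θ in Ioo (-π) π, r * g (Complex.polarCoord.symm (r, θ)))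
        (Ioo (0:ℝ) 1) := by
    intro g hg
    rw [IntegrableOn, hvol, ← Measure.prod_restrict] at hg
    exact hg.integral_prod_left
  have hI1 : IntegrableOn (fun r => r * AA δ r) (Ioo (0:ℝ) 1) :=
    ((transport δ hint1).congr_fun (fun r _ => e1 r) measurableSet_Ioo)
  have hI2 : IntegrableOn (fun r => (r * h r) * AA δ r) (Ioo (0:ℝ) 1) :=
    ((transport (fun z => h (‖z‖) * δ z) hint2).congr_fun
      (fun r hr => e2 r hr) measurableSet_Ioo)
  have hI3 : IntegrableOn (fun r => (r * h r) * (2*π)) (Ioo (0:ℝ) 1) :=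
    ((transport (fun z => h (‖z‖)) hint3).congr_fun
      (fun r hr => e3 r hr) measurableSet_Ioo)
  -- value identities
  have v1 : π = ∫ r in Ioo (0:ℝ) 1, r * AA δ r := by
    rw [← htotal, heq1]
    exact setIntegral_congr_fun measurableSet_Ioo (fun r _ => e1 r)
  have v2 : ∫ z in Metric.ball (0:ℂ) 1, h (‖z‖) * δ z
      = ∫ r in Ioo (0:ℝ) 1, (r * h r) * AA δ r := by
    rw [heq2]
    exact setIntegral_congr_fun measurableSet_Ioo (fun r hr => e2 r hr)
  have v3 : ∫ z in Metric.ball (0:ℂ) 1, h (‖z‖)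
      = ∫ r in Ioo (0:ℝ) 1, (r * h r) * (2*π) := by
    rw [heq3]
    exact setIntegral_congr_fun measurableSet_Ioo (fun r hr => e3 r hr)
  -- monotonicity of circular means
  have hAm : MonotoneOn (AA δ) (Ioo (0:ℝ) 1) := AA_mono hC2 hsub
  -- Chebyshev-type argument
  set S : Set ℝ := {r : ℝ | r ∈ Ioo (0:ℝ) 1 ∧ AA δ r < 2*π} with hS_def
  set c₀ : ℝ := sSup (insert (0:ℝ) S) with hc₀_def
  have bdd : BddAbove (insert (0:ℝ) S) := by
    refine ⟨1, ?_⟩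
    rintro x (rfl | hx)
    · norm_num
    · exact hx.1.2.le
  have hc₀0 : 0 ≤ c₀ := le_csSup bdd (Set.mem_insert _ _)
  have hc₀1 : c₀ ≤ 1 := by
    apply csSup_le (Set.insert_nonempty _ _)
    rintro x (rfl | hx)
    · norm_num
    · exact hx.1.2.le
  have hc₀mem : c₀ ∈ Set.Icc (0:ℝ) 1 := ⟨hc₀0, hc₀1⟩
  have hup : ∀ r ∈ Ioo (0:ℝ) 1, c₀ < r → 2*π ≤ AA δ r := by
    intro r hr hcr
    by_contra hlt
    push_neg at hlt
    have : r ≤ c₀ := le_csSup bdd (Set.mem_insert_of_mem _ ⟨hr, hlt⟩)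
    linarith
  have hlow : ∀ r ∈ Ioo (0:ℝ) 1, r < c₀ → AA δ r ≤ 2*π := by
    intro r hr hrc
    obtain ⟨s, hs, hrs⟩ := exists_lt_of_lt_csSup (Set.insert_nonempty _ _) hrc
    rcases hs with rfl | hs
    · linarith [hr.1]
    · exact le_of_lt (lt_of_le_of_lt (hAm hr hs.1 hrs.le) hs.2)
  have hmonoh : MonotoneOn h (Set.Icc (0:ℝ) 1) := hmono.monotoneOn
  have key : ∀ r ∈ Ioo (0:ℝ) 1, 0 ≤ (h r - h c₀) * (r * (AA δ r - 2*π)) := by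
    intro r hr
    have hrIcc : r ∈ Set.Icc (0:ℝ) 1 := ⟨hr.1.le, hr.2.le⟩
    rcases lt_trichotomy r c₀ with hlt | heq | hgt
    · have h1 : h r ≤ h c₀ := hmonoh hrIcc hc₀mem hlt.le
      have h2 : AA δ r ≤ 2*π := hlow r hr hlt
      have := mul_nonneg (sub_nonneg.2 h1) (mul_nonneg hr.1.le (sub_nonneg.2 h2))
      nlinarith [this]
    · rw [heq]
      simp
    · have h1 : h c₀ ≤ h r := hmonoh hc₀mem hrIcc hgt.le
      have h2 : 2*π ≤ AA δ r := hup r hr hgt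
      exact mul_nonneg (sub_nonneg.2 h1) (mul_nonneg hr.1.le (sub_nonneg.2 h2))
  have hgint : 0 ≤ ∫ r in Ioo (0:ℝ) 1, (h r - h c₀) * (r * (AA δ r - 2*π)) :=
    setIntegral_nonneg measurableSet_Ioo key
  -- expansion
  have hIdent : IntegrableOn (fun r : ℝ => r) (Ioo (0:ℝ) 1) := by
    rw [← intervalIntegrable_iff_integrableOn_Ioo_of_le zero_le_one]
    exact intervalIntegral.intervalIntegrable_id
  have hid_val : ∫ r in Ioo (0:ℝ) 1, r = 1/2 := by
    rw [← integral_Ioc_eq_integral_Ioo, ← intervalIntegral.integral_of_le zero_le_one,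
      integral_id]
    norm_num
  have hexp : (fun r => (h r - h c₀) * (r * (AA δ r - 2*π)))
      = fun r => (((r * h r) * AA δ r - (r * h r) * (2*π)) - h c₀ * (r * AA δ r))
          + (2*π*h c₀) * r := by
    funext r
    ring
  rw [hexp] at hgint
  have t3 : IntegrableOn (fun r => h c₀ * (r * AA δ r)) (Ioo (0:ℝ) 1) := hI1.const_mul _
  have t4 : IntegrableOn (fun r => (2*π*h c₀) * r) (Ioo (0:ℝ) 1) := hIdent.const_mul _
  have t12 : IntegrableOn (fun r => (r * h r) * AA δ r - (r * h r) * (2*π)) (Ioo (0:ℝ) 1) :=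
    hI2.sub hI3
  have t123 : IntegrableOn
      (fun r => (r * h r) * AA δ r - (r * h r) * (2*π) - h c₀ * (r * AA δ r)) (Ioo (0:ℝ) 1) :=
    t12.sub t3
  rw [integral_add t123 t4, integral_sub t12 t3,
    integral_sub hI2 hI3, integral_const_mul, integral_const_mul, hid_val, ← v1] at hgint
  rw [ge_iff_le, v2, v3]
  linarith [hgint]


end
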